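/- Let φ : ℝ² → ℝ be a C² function such that for every open set Ω ⊆ ℝ² and every real-analytic solution u : Ω → ℝ of the minimal surface equation E(u) = 0, the function v := φ(∂ₓu, ∂_yu) is an infinitesimal symmetry (i.e., for every point of Ω the map ε ↦ E(u + εv) has derivative 0 at ε = 0). Then φ satisfies (1 + p²)·∂²φ/∂p² + 2pq·∂²φ/∂p∂q + (1 + q²)·∂²φ/∂q² = 0 at every point (p,q) ∈ ℝ². -/

import Mathlib

/-- Partial derivative in the `x` direction of a function on `ℝ²`. -/
noncomputable def px (f : ℝ × ℝ → ℝ) (z : ℝ × ℝ) : ℝ := fderiv ℝ f z (1, 0)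

/-- Partial derivative in the `y` direction of a function on `ℝ²`. -/
noncomputable def py (f : ℝ × ℝ → ℝ) (z : ℝ × ℝ) : ℝ := fderiv ℝ f z (0, 1)

/-- The two-dimensional minimal surface operator
`E(w) = (1 + w_y²)·w_xx − 2·w_x·w_y·w_xy + (1 + w_x²)·w_yy`. -/
noncomputable def msOp (w : ℝ × ℝ → ℝ) (z : ℝ × ℝ) : ℝ :=
  (1 + (py w z) ^ 2) * px (px w) z - 2 * px w z * py w z * py (px w) z
    + (1 + (px w z) ^ 2) * py (py w) z

/-!
Test the symmetry condition on Scherk's surface `u = log cos x - log cos y`. It solves the minimal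
surface equation on `{cos x > 0, cos y > 0}`, has `u_xy = 0`, and its gradient `(-tan x, tan y)`
maps that square onto `ℝ²`. For `v = φ ∘ ∇u` the chain rule makes the linearised operator at `u`
explicit: the first-order terms in `φ` cancel, and what remains is `(1 + p²)(1 + q²)` times the
determining expression at `(p, q) = ∇u`. As every `(p, q)` is attained, that expression vanishes.
-/

open Real Filter Topology ContinuousLinearMap

lemma ContinuousLinearMap.map_mk_zero_eq_mul {R : Type*} [Semiring R] [TopologicalSpace R]
    (L : R × R →L[R] R) (a : R) : L (a, 0) = a * L (1, 0) := by
  simpa using map_smul L a ((1 : R), (0 : R))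

lemma ContinuousLinearMap.map_zero_mk_eq_mul {R : Type*} [Semiring R] [TopologicalSpace R]
    (L : R × R →L[R] R) (b : R) : L (0, b) = b * L (0, 1) := by
  simpa using map_smul L b ((0 : R), (1 : R))

section Partials

variable {f g : ℝ × ℝ → ℝ} {z : ℝ × ℝ}

lemma px_eq_of_hasFDerivAt {L : ℝ × ℝ →L[ℝ] ℝ} (h : HasFDerivAt f L z) : px f z = L (1, 0) := by
  rw [px, h.fderiv]

lemma py_eq_of_hasFDerivAt {L : ℝ × ℝ →L[ℝ] ℝ} (h : HasFDerivAt f L z) : py f z = L (0, 1) := by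
  rw [py, h.fderiv]

lemma px_congr (h : f =ᶠ[𝓝 z] g) : px f z = px g z := by
  rw [px, px, h.fderiv_eq]

lemma py_congr (h : f =ᶠ[𝓝 z] g) : py f z = py g z := by
  rw [py, py, h.fderiv_eq]

lemma px_eventuallyEq (h : f =ᶠ[𝓝 z] g) : px f =ᶠ[𝓝 z] px g := by
  filter_upwards [h.fderiv (𝕜 := ℝ)] with w hw using by rw [px, px, hw]

lemma py_eventuallyEq (h : f =ᶠ[𝓝 z] g) : py f =ᶠ[𝓝 z] py g := by
  filter_upwards [h.fderiv (𝕜 := ℝ)] with w hw using by rw [py, py, hw]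

lemma msOp_congr (h : f =ᶠ[𝓝 z] g) : msOp f z = msOp g z := by
  rw [msOp, msOp, px_congr h, py_congr h, px_congr (px_eventuallyEq h),
    py_congr (px_eventuallyEq h), py_congr (py_eventuallyEq h)]

lemma ContDiffAt.differentiableAt_fderiv_apply (hf : ContDiffAt ℝ 2 f z) (e : ℝ × ℝ) :
    DifferentiableAt ℝ (fun w => fderiv ℝ f w e) z :=
  ((hf.fderiv_right (m := 1) le_rfl).clm_apply contDiffAt_const).differentiableAt one_ne_zero

variable {u v : ℝ × ℝ → ℝ}

lemma px_add_mul (hu : DifferentiableAt ℝ u z) (hv : DifferentiableAt ℝ v z) (ε : ℝ) :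
    px (fun w => u w + ε * v w) z = px u z + ε * px v z := by
  rw [px_eq_of_hasFDerivAt (f := fun w => u w + ε * v w)
    (hu.hasFDerivAt.add (hv.hasFDerivAt.const_mul ε))]
  simp [px]

lemma py_add_mul (hu : DifferentiableAt ℝ u z) (hv : DifferentiableAt ℝ v z) (ε : ℝ) :
    py (fun w => u w + ε * v w) z = py u z + ε * py v z := by
  rw [py_eq_of_hasFDerivAt (f := fun w => u w + ε * v w)
    (hu.hasFDerivAt.add (hv.hasFDerivAt.const_mul ε))]
  simp [py]

end Partials

section Linearization

variable {u v : ℝ × ℝ → ℝ} {z : ℝ × ℝ}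

noncomputable def msLin (u v : ℝ × ℝ → ℝ) (z : ℝ × ℝ) : ℝ :=
  (1 + py u z ^ 2) * px (px v) z + 2 * py u z * py v z * px (px u) z
    - 2 * (px v z * py u z + px u z * py v z) * py (px u) z
    - 2 * px u z * py u z * py (px v) z
    + (1 + px u z ^ 2) * py (py v) z + 2 * px u z * px v z * py (py u) z

lemma msOp_add_mul (hu : ContDiffAt ℝ 2 u z) (hv : ContDiffAt ℝ 2 v z) (ε : ℝ) :
    msOp (fun w => u w + ε * v w) z =
      (1 + (py u z + ε * py v z) ^ 2) * (px (px u) z + ε * px (px v) z)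
        - 2 * (px u z + ε * px v z) * (py u z + ε * py v z) * (py (px u) z + ε * py (px v) z)
        + (1 + (px u z + ε * px v z) ^ 2) * (py (py u) z + ε * py (py v) z) := by
  have hdiff : ∀ᶠ w in 𝓝 z, DifferentiableAt ℝ u w ∧ DifferentiableAt ℝ v w := by
    filter_upwards [hu.eventually (by simp), hv.eventually (by simp)] with w huw hvw
    exact ⟨huw.differentiableAt two_ne_zero, hvw.differentiableAt two_ne_zero⟩
  have hpx : px (fun w => u w + ε * v w) =ᶠ[𝓝 z] fun w => px u w + ε * px v w := by
    filter_upwards [hdiff] with w h using px_add_mul h.1 h.2 ε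
  have hpy : py (fun w => u w + ε * v w) =ᶠ[𝓝 z] fun w => py u w + ε * py v w := by
    filter_upwards [hdiff] with w h using py_add_mul h.1 h.2 ε
  have hux : DifferentiableAt ℝ (px u) z := hu.differentiableAt_fderiv_apply (1, 0)
  have huy : DifferentiableAt ℝ (py u) z := hu.differentiableAt_fderiv_apply (0, 1)
  have hvx : DifferentiableAt ℝ (px v) z := hv.differentiableAt_fderiv_apply (1, 0)
  have hvy : DifferentiableAt ℝ (py v) z := hv.differentiableAt_fderiv_apply (0, 1)
  rw [msOp, hpx.self_of_nhds, hpy.self_of_nhds, px_congr hpx, py_congr hpx, py_congr hpy,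
    px_add_mul hux hvx, py_add_mul hux hvx, py_add_mul huy hvy]

lemma hasDerivAt_msOp_add_mul (hu : ContDiffAt ℝ 2 u z) (hv : ContDiffAt ℝ 2 v z) :
    HasDerivAt (fun ε : ℝ => msOp (fun w => u w + ε * v w) z) (msLin u v z) 0 := by
  simp_rw [msOp_add_mul hu hv]
  have affine (a b : ℝ) : HasDerivAt (fun ε : ℝ => a + ε * b) b 0 := by
    simpa using ((hasDerivAt_id (0 : ℝ)).mul_const b).const_add a
  refine (((((affine _ _).pow 2).const_add 1).mul (affine _ _)).sub
    ((((affine _ _).const_mul 2).mul (affine _ _)).mul (affine _ _))).add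
    ((((affine _ _).pow 2).const_add 1).mul (affine _ _)) |>.congr_deriv ?_
  simp only [msLin, Nat.cast_ofNat, Nat.add_one_sub_one, pow_one, zero_mul, add_zero, Pi.pow_apply,
    Pi.mul_apply]
  ring

end Linearization

section SeparableChange

variable {f : ℝ × ℝ → ℝ} {α β α' β' : ℝ → ℝ} {a b : ℝ} {z : ℝ × ℝ}

lemma px_comp_prodMap (hf : DifferentiableAt ℝ f (Prod.map α β z))
    (hα : HasDerivAt α a z.1) (hβ : HasDerivAt β b z.2) :
    px (f ∘ Prod.map α β) z = a * px f (Prod.map α β z) := by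
  rw [px_eq_of_hasFDerivAt (hf.hasFDerivAt.comp z (hα.hasFDerivAt.prodMap z hβ.hasFDerivAt))]
  simp only [px, comp_apply, coe_prodMap', Prod.map_apply, toSpanSingleton_apply, smul_eq_mul,
    one_mul, zero_mul]
  rw [map_mk_zero_eq_mul]

lemma py_comp_prodMap (hf : DifferentiableAt ℝ f (Prod.map α β z))
    (hα : HasDerivAt α a z.1) (hβ : HasDerivAt β b z.2) :
    py (f ∘ Prod.map α β) z = b * py f (Prod.map α β z) := by
  rw [py_eq_of_hasFDerivAt (hf.hasFDerivAt.comp z (hα.hasFDerivAt.prodMap z hβ.hasFDerivAt))]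
  simp only [py, comp_apply, coe_prodMap', Prod.map_apply, toSpanSingleton_apply, smul_eq_mul,
    one_mul, zero_mul]
  rw [map_zero_mk_eq_mul]

lemma hasFDerivAt_px_comp_prodMap (hf : ContDiff ℝ 2 f)
    (hα : ∀ᶠ t in 𝓝 z.1, HasDerivAt α (α' t) t) (hβ : ∀ᶠ t in 𝓝 z.2, HasDerivAt β (β' t) t)
    (hα' : HasDerivAt α' a z.1) :
    HasFDerivAt (px (f ∘ Prod.map α β))
      (α' z.1 • (fderiv ℝ (px f) (Prod.map α β z)).comp
          ((toSpanSingleton ℝ (α' z.1)).prodMap (toSpanSingleton ℝ (β' z.2)))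
        + px f (Prod.map α β z) • a • fst ℝ ℝ ℝ) z := by
  have hpx : px (f ∘ Prod.map α β) =ᶠ[𝓝 z] fun w => α' w.1 * px f (Prod.map α β w) := by
    filter_upwards [continuousAt_fst.eventually hα, continuousAt_snd.eventually hβ] with w h1 h2
    exact px_comp_prodMap (hf.differentiable two_ne_zero _) h1 h2
  have hpxf : DifferentiableAt ℝ (px f) (Prod.map α β z) :=
    hf.contDiffAt.differentiableAt_fderiv_apply (1, 0)
  exact ((hα'.comp_hasFDerivAt z hasFDerivAt_fst).mul (hpxf.hasFDerivAt.comp z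
    (hα.self_of_nhds.hasFDerivAt.prodMap z hβ.self_of_nhds.hasFDerivAt))).congr_of_eventuallyEq hpx

lemma hasFDerivAt_py_comp_prodMap (hf : ContDiff ℝ 2 f)
    (hα : ∀ᶠ t in 𝓝 z.1, HasDerivAt α (α' t) t) (hβ : ∀ᶠ t in 𝓝 z.2, HasDerivAt β (β' t) t)
    (hβ' : HasDerivAt β' b z.2) :
    HasFDerivAt (py (f ∘ Prod.map α β))
      (β' z.2 • (fderiv ℝ (py f) (Prod.map α β z)).comp
          ((toSpanSingleton ℝ (α' z.1)).prodMap (toSpanSingleton ℝ (β' z.2)))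
        + py f (Prod.map α β z) • b • snd ℝ ℝ ℝ) z := by
  have hpy : py (f ∘ Prod.map α β) =ᶠ[𝓝 z] fun w => β' w.2 * py f (Prod.map α β w) := by
    filter_upwards [continuousAt_fst.eventually hα, continuousAt_snd.eventually hβ] with w h1 h2
    exact py_comp_prodMap (hf.differentiable two_ne_zero _) h1 h2
  have hpyf : DifferentiableAt ℝ (py f) (Prod.map α β z) :=
    hf.contDiffAt.differentiableAt_fderiv_apply (0, 1)
  exact ((hβ'.comp_hasFDerivAt z hasFDerivAt_snd).mul (hpyf.hasFDerivAt.comp z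
    (hα.self_of_nhds.hasFDerivAt.prodMap z hβ.self_of_nhds.hasFDerivAt))).congr_of_eventuallyEq hpy

lemma px_px_comp_prodMap (hf : ContDiff ℝ 2 f)
    (hα : ∀ᶠ t in 𝓝 z.1, HasDerivAt α (α' t) t) (hβ : ∀ᶠ t in 𝓝 z.2, HasDerivAt β (β' t) t)
    (hα' : HasDerivAt α' a z.1) :
    px (px (f ∘ Prod.map α β)) z
      = a * px f (Prod.map α β z) + α' z.1 ^ 2 * px (px f) (Prod.map α β z) := by
  rw [px_eq_of_hasFDerivAt (hasFDerivAt_px_comp_prodMap hf hα hβ hα')]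
  simp only [px, add_apply, smul_apply, comp_apply, coe_prodMap', Prod.map_apply,
    toSpanSingleton_apply, smul_eq_mul, one_mul, zero_mul, coe_fst', mul_one]
  rw [map_mk_zero_eq_mul]
  ring

lemma py_px_comp_prodMap (hf : ContDiff ℝ 2 f)
    (hα : ∀ᶠ t in 𝓝 z.1, HasDerivAt α (α' t) t) (hβ : ∀ᶠ t in 𝓝 z.2, HasDerivAt β (β' t) t)
    (hα' : HasDerivAt α' a z.1) :
    py (px (f ∘ Prod.map α β)) z = α' z.1 * β' z.2 * py (px f) (Prod.map α β z) := by
  rw [py_eq_of_hasFDerivAt (hasFDerivAt_px_comp_prodMap hf hα hβ hα')]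
  simp only [py, add_apply, smul_apply, comp_apply, coe_prodMap', Prod.map_apply,
    toSpanSingleton_apply, smul_eq_mul, zero_mul, one_mul, coe_fst', mul_zero, add_zero]
  rw [map_zero_mk_eq_mul]
  ring

lemma py_py_comp_prodMap (hf : ContDiff ℝ 2 f)
    (hα : ∀ᶠ t in 𝓝 z.1, HasDerivAt α (α' t) t) (hβ : ∀ᶠ t in 𝓝 z.2, HasDerivAt β (β' t) t)
    (hβ' : HasDerivAt β' b z.2) :
    py (py (f ∘ Prod.map α β)) z
      = b * py f (Prod.map α β z) + β' z.2 ^ 2 * py (py f) (Prod.map α β z) := by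
  rw [py_eq_of_hasFDerivAt (hasFDerivAt_py_comp_prodMap hf hα hβ hβ')]
  simp only [py, add_apply, smul_apply, comp_apply, coe_prodMap', Prod.map_apply,
    toSpanSingleton_apply, smul_eq_mul, zero_mul, one_mul, coe_snd', mul_one]
  rw [map_zero_mk_eq_mul]
  ring

end SeparableChange

section Scherk

variable {x : ℝ} {w : ℝ × ℝ}

lemma eventually_cos_ne_zero (h : cos x ≠ 0) : ∀ᶠ t in 𝓝 x, cos t ≠ 0 :=
  continuous_cos.continuousAt.eventually_ne h

lemma hasDerivAt_log_cos (h : cos x ≠ 0) : HasDerivAt (fun t => log (cos t)) (-tan x) x := by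
  simpa [tan_eq_sin_div_cos, div_eq_mul_inv, mul_comm] using (hasDerivAt_cos x).log h

lemma hasDerivAt_tan_one_add_tan_sq (h : cos x ≠ 0) : HasDerivAt tan (1 + tan x ^ 2) x := by
  convert hasDerivAt_tan h using 1
  rw [tan_eq_sin_div_cos]
  field_simp
  rw [cos_sq_add_sin_sq]

lemma hasDerivAt_one_add_tan_sq (h : cos x ≠ 0) :
    HasDerivAt (fun t => 1 + tan t ^ 2) (2 * tan x * (1 + tan x ^ 2)) x := by
  simpa using ((hasDerivAt_tan_one_add_tan_sq h).pow 2).const_add 1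

noncomputable def scherk (w : ℝ × ℝ) : ℝ := log (cos w.1) - log (cos w.2)

noncomputable def scherkGrad : ℝ × ℝ → ℝ × ℝ := Prod.map (-tan) tan

def scherkDomain : Set (ℝ × ℝ) := {w | 0 < cos w.1 ∧ 0 < cos w.2}

lemma isOpen_scherkDomain : IsOpen scherkDomain :=
  (isOpen_lt continuous_const (continuous_cos.comp continuous_fst)).inter
    (isOpen_lt continuous_const (continuous_cos.comp continuous_snd))

lemma analyticOnNhd_scherk : AnalyticOnNhd ℝ scherk scherkDomain := by
  intro w hw
  have h1 : AnalyticAt ℝ (fun w : ℝ × ℝ => log (cos w.1)) w :=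
    ((analyticAt_log hw.1).comp analyticAt_cos).comp analyticAt_fst
  have h2 : AnalyticAt ℝ (fun w : ℝ × ℝ => log (cos w.2)) w :=
    ((analyticAt_log hw.2).comp analyticAt_cos).comp analyticAt_snd
  exact h1.sub h2

lemma scherk_eq_comp : scherk =
    (fun p : ℝ × ℝ => p.1 - p.2) ∘ Prod.map (fun t => log (cos t)) (fun t => log (cos t)) := rfl

lemma px_fst_sub_snd : px (fun p : ℝ × ℝ => p.1 - p.2) = fun _ => 1 := by
  funext w
  rw [px_eq_of_hasFDerivAt (f := fun p : ℝ × ℝ => p.1 - p.2)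
    (hasFDerivAt_fst.sub hasFDerivAt_snd)]
  simp

lemma py_fst_sub_snd : py (fun p : ℝ × ℝ => p.1 - p.2) = fun _ => -1 := by
  funext w
  rw [py_eq_of_hasFDerivAt (f := fun p : ℝ × ℝ => p.1 - p.2)
    (hasFDerivAt_fst.sub hasFDerivAt_snd)]
  simp

lemma px_scherk (h1 : cos w.1 ≠ 0) (h2 : cos w.2 ≠ 0) : px scherk w = -tan w.1 := by
  rw [scherk_eq_comp, px_comp_prodMap (by fun_prop) (hasDerivAt_log_cos h1) (hasDerivAt_log_cos h2),
    px_fst_sub_snd, mul_one]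

lemma py_scherk (h1 : cos w.1 ≠ 0) (h2 : cos w.2 ≠ 0) : py scherk w = tan w.2 := by
  rw [scherk_eq_comp, py_comp_prodMap (by fun_prop) (hasDerivAt_log_cos h1) (hasDerivAt_log_cos h2),
    py_fst_sub_snd, mul_neg_one, neg_neg]

lemma px_px_scherk (h1 : cos w.1 ≠ 0) (h2 : cos w.2 ≠ 0) :
    px (px scherk) w = -(1 + tan w.1 ^ 2) := by
  rw [scherk_eq_comp, px_px_comp_prodMap (by fun_prop)
    ((eventually_cos_ne_zero h1).mono fun _ => hasDerivAt_log_cos)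
    ((eventually_cos_ne_zero h2).mono fun _ => hasDerivAt_log_cos)
    (hasDerivAt_tan_one_add_tan_sq h1).neg, px_fst_sub_snd]
  simp [px]

lemma py_px_scherk (h1 : cos w.1 ≠ 0) (h2 : cos w.2 ≠ 0) : py (px scherk) w = 0 := by
  rw [scherk_eq_comp, py_px_comp_prodMap (by fun_prop)
    ((eventually_cos_ne_zero h1).mono fun _ => hasDerivAt_log_cos)
    ((eventually_cos_ne_zero h2).mono fun _ => hasDerivAt_log_cos)
    (hasDerivAt_tan_one_add_tan_sq h1).neg, px_fst_sub_snd]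
  simp [py]

lemma py_py_scherk (h1 : cos w.1 ≠ 0) (h2 : cos w.2 ≠ 0) :
    py (py scherk) w = 1 + tan w.2 ^ 2 := by
  rw [scherk_eq_comp, py_py_comp_prodMap (by fun_prop)
    ((eventually_cos_ne_zero h1).mono fun _ => hasDerivAt_log_cos)
    ((eventually_cos_ne_zero h2).mono fun _ => hasDerivAt_log_cos)
    (hasDerivAt_tan_one_add_tan_sq h2).neg, py_fst_sub_snd]
  simp [py]

lemma msOp_scherk (h1 : cos w.1 ≠ 0) (h2 : cos w.2 ≠ 0) : msOp scherk w = 0 := by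
  rw [msOp, px_scherk h1 h2, py_scherk h1 h2, px_px_scherk h1 h2, py_px_scherk h1 h2,
    py_py_scherk h1 h2]
  ring

lemma contDiffAt_scherkGrad {n : WithTop ℕ∞} (h1 : cos w.1 ≠ 0) (h2 : cos w.2 ≠ 0) :
    ContDiffAt ℝ n scherkGrad w :=
  (contDiffAt_tan.2 h1).neg.prodMap (contDiffAt_tan.2 h2)

lemma scherkGrad_eq (h1 : cos w.1 ≠ 0) (h2 : cos w.2 ≠ 0) :
    scherkGrad w = (px scherk w, py scherk w) := by
  rw [px_scherk h1 h2, py_scherk h1 h2]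
  rfl

end Scherk

noncomputable def determiningOp (φ : ℝ × ℝ → ℝ) (z : ℝ × ℝ) : ℝ :=
  (1 + z.1 ^ 2) * px (px φ) z + 2 * z.1 * z.2 * py (px φ) z + (1 + z.2 ^ 2) * py (py φ) z

lemma msLin_scherk_comp_scherkGrad {φ : ℝ × ℝ → ℝ} (hφ : ContDiff ℝ 2 φ) {w : ℝ × ℝ}
    (h1 : cos w.1 ≠ 0) (h2 : cos w.2 ≠ 0) :
    msLin scherk (φ ∘ scherkGrad) w
      = (1 + tan w.1 ^ 2) * (1 + tan w.2 ^ 2) * determiningOp φ (scherkGrad w) := by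
  have hα := (eventually_cos_ne_zero h1).mono fun _ h => (hasDerivAt_tan_one_add_tan_sq h).neg
  have hβ := (eventually_cos_ne_zero h2).mono fun _ h => hasDerivAt_tan_one_add_tan_sq h
  have hφd := hφ.differentiable two_ne_zero (scherkGrad w)
  rw [msLin, scherkGrad, px_scherk h1 h2, py_scherk h1 h2, px_px_scherk h1 h2, py_px_scherk h1 h2,
    py_py_scherk h1 h2, px_comp_prodMap hφd hα.self_of_nhds hβ.self_of_nhds,
    py_comp_prodMap hφd hα.self_of_nhds hβ.self_of_nhds,
    px_px_comp_prodMap hφ hα hβ (hasDerivAt_one_add_tan_sq h1).neg,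
    py_px_comp_prodMap hφ hα hβ (hasDerivAt_one_add_tan_sq h1).neg,
    py_py_comp_prodMap hφ hα hβ (hasDerivAt_one_add_tan_sq h2), determiningOp]
  simp only [Prod.map_fst, Prod.map_snd, Pi.neg_apply]
  ring

lemma hasDerivAt_msOp_scherk_add_mul {φ : ℝ × ℝ → ℝ} (hφ : ContDiff ℝ 2 φ) {w : ℝ × ℝ}
    (hw : w ∈ scherkDomain) :
    HasDerivAt (fun ε : ℝ => msOp (fun w' => scherk w' + ε * φ (px scherk w', py scherk w')) w)
      ((1 + tan w.1 ^ 2) * (1 + tan w.2 ^ 2) * determiningOp φ (scherkGrad w)) 0 := by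
  have hv : (fun w' => φ (px scherk w', py scherk w')) =ᶠ[𝓝 w] φ ∘ scherkGrad := by
    filter_upwards [isOpen_scherkDomain.mem_nhds hw] with w' hw'
    rw [Function.comp_apply, scherkGrad_eq hw'.1.ne' hw'.2.ne']
  rw [← msLin_scherk_comp_scherkGrad hφ hw.1.ne' hw.2.ne']
  refine (hasDerivAt_msOp_add_mul (analyticOnNhd_scherk w hw).contDiffAt
    (hφ.contDiffAt.comp w (contDiffAt_scherkGrad hw.1.ne' hw.2.ne'))).congr_of_eventuallyEq
    (Eventually.of_forall fun ε => msOp_congr ?_)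
  filter_upwards [hv] with w' h
  rw [h]

/-- Conversely, if a `C²` function `φ(p,q)` generates an infinitesimal symmetry
`v = φ(u_x, u_y)` at every real-analytic solution `u` of the two-dimensional
minimal surface equation, then `φ` satisfies the determining equation
`(1 + p²)·φ_pp + 2pq·φ_pq + (1 + q²)·φ_qq = 0` everywhere. -/
theorem contact_symmetry_satisfies_determining_equation
    (φ : ℝ × ℝ → ℝ) (hφ : ContDiff ℝ 2 φ)
    (hsym : ∀ (Ω : Set (ℝ × ℝ)), IsOpen Ω → ∀ u : ℝ × ℝ → ℝ, AnalyticOnNhd ℝ u Ω →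
      (∀ z ∈ Ω, msOp u z = 0) →
      ∀ z ∈ Ω, HasDerivAt
        (fun ε : ℝ => msOp (fun w => u w + ε * φ (px u w, py u w)) z) 0 0) :
    ∀ z : ℝ × ℝ, (1 + z.1 ^ 2) * px (px φ) z + 2 * z.1 * z.2 * py (px φ) z
      + (1 + z.2 ^ 2) * py (py φ) z = 0 := by
  intro z
  set w : ℝ × ℝ := (arctan (-z.1), arctan z.2)
  have hw : w ∈ scherkDomain := ⟨cos_arctan_pos _, cos_arctan_pos _⟩
  have hgrad : scherkGrad w = z := by simp [w, scherkGrad, tan_arctan]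
  have hvar := hsym _ isOpen_scherkDomain scherk analyticOnNhd_scherk
    (fun w' hw' => msOp_scherk hw'.1.ne' hw'.2.ne') w hw
  have hzero := (hasDerivAt_msOp_scherk_add_mul hφ hw).unique hvar
  rw [hgrad] at hzero
  have hpos : 0 < (1 + tan w.1 ^ 2) * (1 + tan w.2 ^ 2) := by positivity
  exact (mul_eq_zero.mp hzero).resolve_left hpos.ne'
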